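/- Let p be a prime, let G be a Camina group that is a finite p-group, and let z ∈ G with z ∉ G' (the commutator subgroup). Then for all x, y ∈ G: y·x⁻¹ ∈ z^G if and only if y^G ⊆ x^G · z^G (where x^G · z^G = {ab : a ∈ x^G, b ∈ z^G}). -/

import Mathlib

open scoped Classical Pointwise

/-- The conjugacy class of `x` in `G`. -/
def conjClass {G : Type*} [Group G] (x : G) : Set G := {y | ∃ g : G, g * x * g⁻¹ = y}

/-- The adjacency matrix of a subset `C` of `G`. -/
noncomputable def adjMat (G : Type*) [Group G] (C : Set G) : Matrix G G ℂ :=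
  Matrix.of fun x y => if y * x⁻¹ ∈ C then (1 : ℂ) else 0

/-- The dual idempotent of a subset `C` of `G` (base point the identity). -/
noncomputable def dualIdem (G : Type*) [Group G] (C : Set G) : Matrix G G ℂ :=
  Matrix.of fun x y => if x = y ∧ y ∈ C then (1 : ℂ) else 0

/-- The Terwilliger algebra of the group association scheme of `G`, with base point `e`. -/
noncomputable def TerwAlg (G : Type*) [Group G] [Fintype G] [DecidableEq G] : Subalgebra ℂ (Matrix G G ℂ) :=
  Algebra.adjoin ℂ
    ((Set.range fun x : G => adjMat G (conjClass x)) ∪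
     (Set.range fun x : G => dualIdem G (conjClass x)))

/-- A Camina group: a nonabelian group in which every conjugacy class outside the
commutator subgroup is a coset of the commutator subgroup. -/
def IsCamina (G : Type*) [Group G] : Prop :=
  (¬ ∀ a b : G, a * b = b * a) ∧
  ∀ x : G, x ∉ commutator G → conjClass x = x • (commutator G : Set G)

/-- The action of the unit group of a field on (the multiplicative version of) its
additive group, by multiplication. -/
noncomputable def frobAct (F : Type*) [Field F] : Fˣ →* MulAut (Multiplicative F) where
  toFun u := AddEquiv.toMultiplicative (DistribMulAction.toAddAut Fˣ F u)
  map_one' := by ext x; simp only [map_one]; rfl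
  map_mul' u v := by ext x; simp only [map_mul]; rfl


/-- The Frobenius group `F ⋊ Fˣ` for `F` the field with `p ^ r` elements. -/
abbrev FrobGrp (p r : ℕ) [Fact p.Prime] : Type :=
  Multiplicative (GaloisField p r) ⋊[frobAct (GaloisField p r)] (GaloisField p r)ˣ

/-! In any group, `y * x⁻¹ ∈ z^G` gives `y^G ⊆ x^G · z^G`, while `y ∈ x^G · z^G` only
gives `y * x⁻¹ ∈ z G'`, since conjugates agree modulo `G'`. The Camina property `z^G = z G'`
closes the gap. -/

section ConjClass

variable {G : Type*} [Group G]

theorem conjClass_subset_of_mem {x y : G} (hy : y ∈ conjClass x) : conjClass y ⊆ conjClass x := by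
  obtain ⟨h, rfl⟩ := hy
  rintro _ ⟨g, rfl⟩
  exact ⟨g * h, by group⟩

theorem conjClass_mul_subset (a b : G) : conjClass (a * b) ⊆ conjClass a * conjClass b := by
  rintro _ ⟨g, rfl⟩
  exact ⟨_, ⟨g, rfl⟩, _, ⟨g, rfl⟩, by group⟩

theorem conjClass_subset_mul_of_mul_inv_mem {x y z : G} (h : y * x⁻¹ ∈ conjClass z) :
    conjClass y ⊆ conjClass x * conjClass z := by
  have hy : y = x * (x⁻¹ * (y * x⁻¹) * x⁻¹⁻¹) := by group
  rw [hy]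
  exact (conjClass_mul_subset _ _).trans
    (Set.mul_subset_mul_left (conjClass_subset_of_mem (conjClass_subset_of_mem h ⟨x⁻¹, rfl⟩)))

theorem Abelianization.of_eq_of_mem_conjClass {x y : G} (hy : y ∈ conjClass x) :
    Abelianization.of y = Abelianization.of x := by
  obtain ⟨g, rfl⟩ := hy
  simp

theorem mul_inv_mem_smul_commutator_of_mem_mul {x y z : G}
    (hy : y ∈ conjClass x * conjClass z) : y * x⁻¹ ∈ z • (commutator G : Set G) := by
  obtain ⟨a, ha, b, hb, rfl⟩ := hy
  have hab : Abelianization.of z = Abelianization.of (a * b * x⁻¹) := by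
    simp [Abelianization.of_eq_of_mem_conjClass ha, Abelianization.of_eq_of_mem_conjClass hb,
      mul_comm (Abelianization.of x)]
  exact (mem_leftCoset_iff z).mpr (QuotientGroup.eq.mp hab)

end ConjClass

theorem stmt10_general {G : Type*} [Group G]
    (hcam : IsCamina G) (z : G) (hz : z ∉ commutator G) :
    ∀ x y : G, y * x⁻¹ ∈ conjClass z ↔ conjClass y ⊆ conjClass x * conjClass z := by
  intro x y
  refine ⟨conjClass_subset_mul_of_mul_inv_mem, fun hsub => ?_⟩
  rw [hcam.2 z hz]
  exact mul_inv_mem_smul_commutator_of_mem_mul (hsub ⟨1, by group⟩)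

/-- Lemma 5.5: in a Camina `p`-group, for a class outside the commutator subgroup,
`y·x⁻¹ ∈ z^G` iff `y^G ⊆ x^G · z^G`. -/
theorem stmt10 (p : ℕ) (hp : p.Prime) {G : Type*} [Group G] [Finite G]
    (hpg : IsPGroup p G) (hcam : IsCamina G) (z : G) (hz : z ∉ commutator G) :
    ∀ x y : G, y * x⁻¹ ∈ conjClass z ↔ conjClass y ⊆ conjClass x * conjClass z :=
  stmt10_general hcam z hz
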